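/- Let F be a probability distribution on the reals with finite moments and let t: ℝ×ℝ → ℝ be integrable. Define μᵗ(F) = E[t(X,X) − t(X,Y)] where X, Y are independent with law F. If X_1,...,X_n is a simple random sample without replacement of size n from a finite population with empirical distribution F_N, and F_n denotes the empirical distribution of the sample, then E[μᵗ(F_n)] = ((1−n⁻¹)/(1−N⁻¹)) μᵗ(F_N). -/

import Mathlib

/-!
Relabelling the population by a permutation shows that restricting a uniformly random injection
`Fin n ↪ Fin N` along any `Fin k ↪ Fin n` gives a uniformly random injection `Fin k ↪ Fin N`,
because every injection of a finite type extends to a permutation. So a single draw `σ i` is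
uniform on the population, and a pair `(σ i, σ j)` with `i ≠ j` is uniform on ordered pairs of
distinct units. By linearity, `E[μᵗ(F_n)] = (1 - n⁻¹) (D - O)` with `D = S₁ / N` and
`O = (S₂ - S₁) / (N (N - 1))`, where `S₁ = ∑ t(x_a, x_a)` and `S₂ = ∑ t(x_a, x_b)`; and
`D - O = N / (N - 1) · μᵗ(F_N)`.
-/

open Finset

/-- Expectation under simple random sampling without replacement: the average of `g`
over all ordered samples of `n` distinct indices (i.e. embeddings `Fin n ↪ Fin N`),
each equally likely. -/
noncomputable def srsExp (N n : ℕ) (g : (Fin n ↪ Fin N) → ℝ) : ℝ :=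
  (∑ σ : Fin n ↪ Fin N, g σ) / (Fintype.card (Fin n ↪ Fin N))

/-- The generalized second-order central moment
`μᵗ(F) = E[t(X,X) - t(X,Y)] = (1/m)∑ t(y_i,y_i) - (1/m²)∑∑ t(y_i,y_j)`
computed from an empirical distribution of `m` points. -/
noncomputable def muT (m : ℕ) (t : ℝ → ℝ → ℝ) (y : Fin m → ℝ) : ℝ :=
  (∑ i, t (y i) (y i)) / m - (∑ i, ∑ j, t (y i) (y j)) / (m ^ 2 : ℝ)

namespace Function.Embedding

variable {α β γ : Type*} [Fintype α] [Fintype β] [DecidableEq β] [Fintype γ]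

theorem card_filter_trans_eq (ι : γ ↪ α) (τ τ' : γ ↪ β) :
    #{σ : α ↪ β | ι.trans σ = τ} = #{σ : α ↪ β | ι.trans σ = τ'} := by
  obtain ⟨π, rfl⟩ := Equiv.Perm.exists_smul_eq_embedding τ τ'
  refine card_equiv (MulAction.toPerm π) fun σ => ?_
  have : ι.trans (π • σ) = π • ι.trans σ := by ext; simp [smul_apply]
  simp [this]

theorem exists_sum_comp_trans_eq_mul (ι : γ ↪ α) :
    ∃ c : ℕ, ∀ f : (γ ↪ β) → ℝ, ∑ σ : α ↪ β, f (ι.trans σ) = c * ∑ τ, f τ := by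
  rcases isEmpty_or_nonempty (α ↪ β) with hαβ | hαβ
  · exact ⟨0, fun f => by simp⟩
  obtain ⟨σ₀⟩ := hαβ
  refine ⟨#{σ : α ↪ β | ι.trans σ = ι.trans σ₀}, fun f => ?_⟩
  rw [← sum_fiberwise' univ (fun σ : α ↪ β => ι.trans σ) f, mul_sum]
  refine sum_congr rfl fun τ _ => ?_
  rw [sum_const, card_filter_trans_eq ι τ (ι.trans σ₀), nsmul_eq_mul]

theorem sum_comp_trans_div_card [Nonempty (α ↪ β)] (ι : γ ↪ α) (f : (γ ↪ β) → ℝ) :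
    (∑ σ : α ↪ β, f (ι.trans σ)) / Fintype.card (α ↪ β)
      = (∑ τ, f τ) / Fintype.card (γ ↪ β) := by
  obtain ⟨c, hc⟩ := exists_sum_comp_trans_eq_mul (β := β) ι
  have hcard : (Fintype.card (α ↪ β) : ℝ) = c * Fintype.card (γ ↪ β) := by
    simpa using hc 1
  have hc0 : (c : ℝ) ≠ 0 := by
    have hpos : (0 : ℝ) < Fintype.card (α ↪ β) := mod_cast Fintype.card_pos
    rintro h
    rw [h, zero_mul] at hcard
    exact hpos.ne' hcard
  rw [hc f, hcard, mul_div_mul_left _ _ hc0]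

end Function.Embedding

theorem Fin.sum_embedding_two_eq_sum_sub_sum_diag {N : ℕ} (g : Fin N → Fin N → ℝ) :
    ∑ τ : Fin 2 ↪ Fin N, g (τ 0) (τ 1) = ∑ a, ∑ b, g a b - ∑ a, g a a := by
  rw [Fintype.sum_equiv Function.Embedding.twoEmbeddingEquiv (fun τ => g (τ 0) (τ 1))
      (fun p => g p.1.1 p.1.2) fun _ => rfl,
    ← sum_subtype (univ.filter fun p : Fin N × Fin N => p.1 ≠ p.2) (by simp) (fun p => g p.1 p.2),
    eq_sub_of_add_eq (sum_filter_not_add_sum_filter univ (fun p : Fin N × Fin N => p.1 = p.2)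
      (fun p => g p.1 p.2)),
    Fintype.sum_prod_type]
  simp only [sum_filter, Fintype.sum_prod_type, sum_ite_eq, mem_univ, if_true]

theorem Fin.card_embedding_two (N : ℕ) :
    (Fintype.card (Fin 2 ↪ Fin N) : ℝ) = N * (N - 1) := by
  rw [Fintype.card_embedding_eq]
  rcases N with _ | N <;> simp [Nat.descFactorial]
  ring

theorem Fintype.sum_sum_ite_eq {ι : Type*} [Fintype ι] [DecidableEq ι] (d o : ℝ) :
    ∑ i : ι, ∑ j : ι, (if i = j then d else o) = card ι * (d + (card ι - 1) * o) := by
  have hsplit (i j : ι) : (if i = j then d else o) = o + if i = j then d - o else 0 := by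
    split_ifs <;> ring
  simp only [hsplit, sum_add_distrib, sum_ite_eq, sum_const, card_univ, nsmul_eq_mul]
  ring

section srsExp

variable {N n : ℕ}

theorem srsExp_sub (f g : (Fin n ↪ Fin N) → ℝ) :
    srsExp N n (fun σ => f σ - g σ) = srsExp N n f - srsExp N n g := by
  simp only [srsExp, sum_sub_distrib, sub_div]

theorem srsExp_div_const (f : (Fin n ↪ Fin N) → ℝ) (c : ℝ) :
    srsExp N n (fun σ => f σ / c) = srsExp N n f / c := by
  simp only [srsExp, ← sum_div, div_right_comm _ c]

theorem srsExp_sum {ι : Type*} (s : Finset ι) (f : ι → (Fin n ↪ Fin N) → ℝ) :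
    srsExp N n (fun σ => ∑ i ∈ s, f i σ) = ∑ i ∈ s, srsExp N n (f i) := by
  simp only [srsExp, sum_div]
  exact sum_comm

theorem srsExp_comp_trans {k : ℕ} (hnN : n ≤ N) (ι : Fin k ↪ Fin n) (f : (Fin k ↪ Fin N) → ℝ) :
    srsExp N n (fun σ => f (ι.trans σ)) = srsExp N k f :=
  have : Nonempty (Fin n ↪ Fin N) := ⟨Fin.castLEEmb hnN⟩
  Function.Embedding.sum_comp_trans_div_card ι f

theorem srsExp_one (g : Fin N → ℝ) : srsExp N 1 (fun τ => g (τ 0)) = (∑ a, g a) / N := by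
  rw [srsExp, Fintype.sum_equiv Equiv.uniqueEmbeddingEquivResult (fun τ => g (τ 0)) g
    fun _ => rfl, Fintype.card_embedding_eq_of_unique, Fintype.card_fin]

theorem srsExp_two (g : Fin N → Fin N → ℝ) :
    srsExp N 2 (fun τ => g (τ 0) (τ 1)) = (∑ a, ∑ b, g a b - ∑ a, g a a) / (N * (N - 1)) := by
  rw [srsExp, Fin.sum_embedding_two_eq_sum_sub_sum_diag, Fin.card_embedding_two]

theorem srsExp_apply (hnN : n ≤ N) (i : Fin n) (g : Fin N → ℝ) :
    srsExp N n (fun σ => g (σ i)) = (∑ a, g a) / N :=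
  (srsExp_comp_trans hnN (Equiv.uniqueEmbeddingEquivResult.symm i) _).trans (srsExp_one g)

theorem srsExp_apply_apply (hnN : n ≤ N) {i j : Fin n} (hij : i ≠ j) (g : Fin N → Fin N → ℝ) :
    srsExp N n (fun σ => g (σ i) (σ j)) = (∑ a, ∑ b, g a b - ∑ a, g a a) / (N * (N - 1)) :=
  (srsExp_comp_trans hnN (Function.Embedding.embFinTwo hij) _).trans (srsExp_two g)

end srsExp

/-- The generalized second-order central moment is an eigenfunction:
`E[μᵗ(F_n)] = ((1 - n⁻¹)/(1 - N⁻¹)) μᵗ(F_N)` under SRSWOR. -/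
theorem srs_muT_eigen (N n : ℕ) (hn : 2 ≤ n) (hnN : n ≤ N)
    (t : ℝ → ℝ → ℝ) (x : Fin N → ℝ) :
    srsExp N n (fun σ => muT n t (fun i => x (σ i)))
      = ((1 - (n : ℝ)⁻¹) / (1 - (N : ℝ)⁻¹)) * muT N t x := by
  set S₁ := ∑ a, t (x a) (x a)
  set S₂ := ∑ a, ∑ b, t (x a) (x b)
  have hpair (i j : Fin n) : srsExp N n (fun σ => t (x (σ i)) (x (σ j)))
      = if i = j then S₁ / N else (S₂ - S₁) / (N * (N - 1)) := by
    split_ifs with hij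
    · subst hij; exact srsExp_apply hnN i fun a => t (x a) (x a)
    · exact srsExp_apply_apply hnN hij fun a b => t (x a) (x b)
  have hN : (2 : ℝ) ≤ N := mod_cast hn.trans hnN
  have hN₁ : (N : ℝ) - 1 ≠ 0 := by linarith
  simp only [muT, srsExp_sub, srsExp_div_const, srsExp_sum, hpair, if_pos,
    Fintype.sum_sum_ite_eq, Fintype.card_fin, sum_const, card_univ, nsmul_eq_mul]
  field_simp
  ring
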